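/- arXiv:2211.09464 — 2 statements merged into one kernel-verified Lean document; each statement's English description precedes it below -/
import Mathlib

section
/- Let (ŷ₁,...,ŷₙ) be the minimizer of ∑ᵢ(xᵢ - yᵢ)² over the monotone cone C = {y ∈ ℝⁿ : y₁ ≤ ... ≤ yₙ}. Then the minimizer of the same sum over the bounded monotone cone C' = {y : a ≤ y₁ ≤ ... ≤ yₙ ≤ b} (with a ≤ b) is given coordinatewise by ỹᵢ = max(a, min(ŷᵢ, b)). -/
/-!
Write `r = x - ŷ` for the residual of the isotonic fit. Since the monotone cone is convex,
`ŷ` satisfies the variational inequality `⟪r, z - ŷ⟫ ≤ 0` for every monotone `z`.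
For `y ∈ C'`, expanding `‖x - y‖² - ‖x - ỹ‖²` around `ŷ` gives
`2⟪r, ŷ - y⟫ - 2⟪r, ŷ - ỹ⟫ + ‖ŷ - y‖² - ‖ŷ - ỹ‖²`. The first term is nonnegative with `z = y`;
the second is nonnegative with `z = ŷ + (ŷ - ỹ)`, which is monotone because
`t ↦ t - max a (min t b)` is non-decreasing; the last is nonnegative coordinatewise because
clamping `ŷᵢ` to `[a, b]` is the nearest point of `[a, b]`.
-/

open Finset

lemma convex_setOf_monotone {ι : Type*} [Preorder ι] :
    Convex ℝ {f : ι → ℝ | Monotone f} := by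
  intro f hf g hg s t hs ht _
  exact (hf.const_smul hs).add (hg.const_smul ht)

lemma nonpos_of_forall_two_mul_le_mul {S Q : ℝ}
    (h : ∀ t : ℝ, 0 < t → t ≤ 1 → 2 * S ≤ t * Q) : S ≤ 0 := by
  by_contra! hS
  have hQ : 0 < Q := by linarith [h 1 one_pos le_rfl]
  have ht : min 1 (S / Q) * Q ≤ S := by
    calc min 1 (S / Q) * Q ≤ S / Q * Q := by gcongr; exact min_le_right _ _
      _ = S := div_mul_cancel₀ S hQ.ne'
  linarith [h (min 1 (S / Q)) (lt_min one_pos (div_pos hS hQ)) (min_le_left _ _)]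

section Projection

variable {ι : Type*} [Fintype ι] {K : Set (ι → ℝ)} {x p : ι → ℝ}

lemma sum_residual_mul_sub_nonpos (hK : Convex ℝ K) (hp : p ∈ K)
    (hmin : IsMinOn (fun y => ∑ i, (x i - y i) ^ 2) K p) {z : ι → ℝ} (hz : z ∈ K) :
    ∑ i, (x i - p i) * (z i - p i) ≤ 0 := by
  refine nonpos_of_forall_two_mul_le_mul (Q := ∑ i, (z i - p i) ^ 2) fun t ht0 ht1 => ?_
  have hseg : p + t • (z - p) ∈ K := hK.add_smul_sub_mem hp hz ⟨ht0.le, ht1⟩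
  have hle := isMinOn_iff.1 hmin _ hseg
  have hexpand : ∑ i, (x i - (p + t • (z - p)) i) ^ 2 = ∑ i, (x i - p i) ^ 2
      - 2 * t * ∑ i, (x i - p i) * (z i - p i) + t ^ 2 * ∑ i, (z i - p i) ^ 2 := by
    simp only [mul_sum, ← sum_sub_distrib, ← sum_add_distrib]
    refine sum_congr rfl fun i _ => ?_
    simp only [Pi.add_apply, Pi.smul_apply, Pi.sub_apply, smul_eq_mul]
    ring
  rw [hexpand] at hle
  nlinarith

lemma sum_sq_sub_le_of_isMinOn (hK : Convex ℝ K) (hp : p ∈ K)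
    (hmin : IsMinOn (fun y => ∑ i, (x i - y i) ^ 2) K p) {q y : ι → ℝ}
    (hq : p + (p - q) ∈ K) (hy : y ∈ K) (hqy : ∀ i, (p i - q i) ^ 2 ≤ (p i - y i) ^ 2) :
    ∑ i, (x i - q i) ^ 2 ≤ ∑ i, (x i - y i) ^ 2 := by
  have hvi_q : ∑ i, (x i - p i) * (p i - q i) ≤ 0 := by
    simpa using sum_residual_mul_sub_nonpos hK hp hmin hq
  have hvi_y := sum_residual_mul_sub_nonpos hK hp hmin hy
  have hpt : ∀ i, (x i - q i) ^ 2 ≤ (x i - y i) ^ 2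
      + 2 * ((x i - p i) * (p i - q i)) + 2 * ((x i - p i) * (y i - p i)) := fun i => by
    nlinarith [hqy i]
  calc ∑ i, (x i - q i) ^ 2
      ≤ ∑ i, ((x i - y i) ^ 2 + 2 * ((x i - p i) * (p i - q i))
          + 2 * ((x i - p i) * (y i - p i))) := sum_le_sum fun i _ => hpt i
    _ = ∑ i, (x i - y i) ^ 2 + 2 * ∑ i, (x i - p i) * (p i - q i)
          + 2 * ∑ i, (x i - p i) * (y i - p i) := by
      simp only [sum_add_distrib, mul_sum]
    _ ≤ ∑ i, (x i - y i) ^ 2 := by linarith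

end Projection

lemma monotone_sub_max_min (a b : ℝ) : Monotone fun t : ℝ => t - max a (min t b) := by
  intro s t hst
  simp only [max_def, min_def]
  split_ifs <;> linarith

lemma sq_sub_max_min_le {a b t y : ℝ} (hay : a ≤ y) (hyb : y ≤ b) :
    (t - max a (min t b)) ^ 2 ≤ (t - y) ^ 2 := by
  simp only [max_def, min_def]
  split_ifs <;> nlinarith

theorem stmt2 (n : ℕ) (x yhat : Fin n → ℝ) (a b : ℝ) (hab : a ≤ b)
    (hmono : Monotone yhat)
    (hmin : ∀ y : Fin n → ℝ, Monotone y →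
      ∑ i, (x i - yhat i)^2 ≤ ∑ i, (x i - y i)^2) :
    Monotone (fun i => max a (min (yhat i) b)) ∧
    (∀ i, a ≤ max a (min (yhat i) b) ∧ max a (min (yhat i) b) ≤ b) ∧
    (∀ y : Fin n → ℝ, Monotone y → (∀ i, a ≤ y i ∧ y i ≤ b) →
      ∑ i, (x i - max a (min (yhat i) b))^2 ≤ ∑ i, (x i - y i)^2) := by
  refine ⟨fun i j hij => max_le_max le_rfl (min_le_min (hmono hij) le_rfl),
    fun i => ⟨le_max_left _ _, max_le hab (min_le_right _ _)⟩, fun y hy hyab => ?_⟩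
  have hshift : Monotone (yhat + (yhat - fun i => max a (min (yhat i) b))) :=
    hmono.add ((monotone_sub_max_min a b).comp hmono)
  exact sum_sq_sub_le_of_isMinOn convex_setOf_monotone hmono (isMinOn_iff.2 hmin) hshift hy
    fun i => sq_sub_max_min_le (hyab i).1 (hyab i).2
end

section
/- Suppose the density functions g_γ of the index γᵀX are uniformly bounded by q̄. Then for any monotone non-decreasing function φ : ℝ → [ε', 1-ε'], any ζ > 0, and r > 0 with supp(γᵀX) ⊆ [-r, r]: ∫ [φ(γᵀx + ζr) - φ(γᵀx - ζr)] dQ_X(x) ≤ 2 r q̄ (1 - 2ε') ζ. -/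
/-! After pushing `Q` forward along `x ↦ ⟪γ, x⟫`, the integral becomes `∫ g(t) f(t) dt` with
`f(t) = φ(t + ζr) - φ(t - ζr) ≥ 0`, which is at most `q̄ ∫_{-r}^{r} f`. Shifting the two terms of
`f` telescopes `∫_{-r}^{r} f` into `∫_{r-ζr}^{r+ζr} φ - ∫_{-r-ζr}^{-r+ζr} φ`, two integrals over
intervals of length `2ζr` of a function with values in `[ε', 1 - ε']`. -/

open MeasureTheory

theorem integral_comp_eq_integral_smul_of_map_eq_withDensity {Ω α E : Type*}
    [MeasurableSpace Ω] [MeasurableSpace α] [NormedAddCommGroup E] [NormedSpace ℝ E]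
    {Q : Measure Ω} {μ : Measure α} {X : Ω → α} (hX : AEMeasurable X Q)
    {g : α → ℝ} (hg_nonneg : ∀ t, 0 ≤ g t) (hg_meas : Measurable g)
    (hmap : Q.map X = μ.withDensity fun t => ENNReal.ofReal (g t))
    {f : α → E} (hf : AEStronglyMeasurable f (Q.map X)) :
    ∫ x, f (X x) ∂Q = ∫ t, g t • f t ∂μ := by
  rw [← integral_map hX hf, hmap]
  change ∫ t, f t ∂μ.withDensity (fun t => ((g t).toNNReal : ENNReal)) = _
  rw [integral_withDensity_eq_integral_smul hg_meas.real_toNNReal]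
  simp only [NNReal.smul_def, Real.coe_toNNReal _ (hg_nonneg _)]

theorem integral_mul_le_mul_setIntegral {α : Type*} [MeasurableSpace α] {μ : Measure α}
    {s : Set α} (hs : MeasurableSet s) {f g : α → ℝ} {C : ℝ}
    (hf_nonneg : ∀ t, 0 ≤ f t) (hf : IntegrableOn f s μ)
    (hg_nonneg : ∀ t, 0 ≤ g t) (hg_le : ∀ t, g t ≤ C) (hg_supp : ∀ t ∉ s, g t = 0) :
    ∫ t, g t * f t ∂μ ≤ C * ∫ t in s, f t ∂μ := by
  rw [← integral_const_mul, ← integral_indicator hs]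
  refine integral_mono_of_nonneg (.of_forall fun t => mul_nonneg (hg_nonneg t) (hf_nonneg t))
    ((integrable_indicator_iff hs).2 (hf.const_mul C)) (.of_forall fun t => ?_)
  by_cases ht : t ∈ s
  · rw [Set.indicator_of_mem ht]
    exact mul_le_mul_of_nonneg_right (hg_le t) (hf_nonneg t)
  · simp only [Set.indicator_of_notMem ht, hg_supp t ht, zero_mul, le_refl]

namespace intervalIntegral

theorem integral_comp_add_sub_comp_sub {E : Type*} [NormedAddCommGroup E] [NormedSpace ℝ E]
    {f : ℝ → E}
    (hf : ∀ a b, IntervalIntegrable f volume a b) (a b c : ℝ) :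
    ∫ t in a..b, (f (t + c) - f (t - c)) =
      (∫ t in (b - c)..(b + c), f t) - ∫ t in (a - c)..(a + c), f t := by
  have h_add : IntervalIntegrable (fun t => f (t + c)) volume a b :=
    (IntervalIntegrable.comp_add_right_iff (by finiteness)).2 (hf _ _)
  have h_sub : IntervalIntegrable (fun t => f (t - c)) volume a b := by
    simpa using (hf (a - c) (b - c)).comp_sub_right c
  rw [integral_sub h_add h_sub,
    integral_comp_add_right, integral_comp_sub_right,
    integral_interval_sub_interval_comm' (hf _ _) (hf _ _) (hf _ _)]

end intervalIntegral

theorem Monotone.intervalIntegral_comp_add_sub_comp_sub_le {φ : ℝ → ℝ} (hφ : Monotone φ)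
    {m M : ℝ} (hm : ∀ u, m ≤ φ u) (hM : ∀ u, φ u ≤ M) (a b : ℝ) {c : ℝ} (hc : 0 ≤ c) :
    ∫ t in a..b, (φ (t + c) - φ (t - c)) ≤ 2 * c * (M - m) := by
  have hint : ∀ a b, IntervalIntegrable φ volume a b := fun _ _ => hφ.intervalIntegrable
  have hle : ∀ x, x - c ≤ x + c := fun x => by linarith
  have upper : ∫ t in (b - c)..(b + c), φ t ≤ 2 * c * M := by
    calc ∫ t in (b - c)..(b + c), φ t ≤ ∫ _ in (b - c)..(b + c), M :=
          intervalIntegral.integral_mono_on (hle b) (hint _ _) intervalIntegrable_const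
            fun u _ => hM u
      _ = 2 * c * M := by rw [intervalIntegral.integral_const, smul_eq_mul]; ring
  have lower : 2 * c * m ≤ ∫ t in (a - c)..(a + c), φ t := by
    calc 2 * c * m = ∫ _ in (a - c)..(a + c), m := by
          rw [intervalIntegral.integral_const, smul_eq_mul]; ring
      _ ≤ ∫ t in (a - c)..(a + c), φ t :=
          intervalIntegral.integral_mono_on (hle a) intervalIntegrable_const (hint _ _)
            fun u _ => hm u
  rw [intervalIntegral.integral_comp_add_sub_comp_sub hint]
  linarith

theorem stmt9_general (d : ℕ) (Q : Measure (EuclideanSpace ℝ (Fin d)))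
    [IsProbabilityMeasure Q]
    (γ : EuclideanSpace ℝ (Fin d))
    (g : ℝ → ℝ) (qbar r ζ ε' : ℝ) (hr : 0 < r) (hζ : 0 < ζ)
    (hg_nonneg : ∀ t, 0 ≤ g t) (hg_meas : Measurable g)
    (hg_bound : ∀ t, g t ≤ qbar)
    (hg_supp : ∀ t, t ∉ Set.Icc (-r) r → g t = 0)
    (hmap : Q.map (fun x => (inner ℝ γ x : ℝ)) =
      MeasureTheory.volume.withDensity (fun t => ENNReal.ofReal (g t)))
    (φ : ℝ → ℝ) (hφ : Monotone φ) (hφb : ∀ u, φ u ∈ Set.Icc ε' (1 - ε')) :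
    ∫ x, (φ ((inner ℝ γ x : ℝ) + ζ * r) - φ ((inner ℝ γ x : ℝ) - ζ * r)) ∂Q
      ≤ 2 * r * qbar * (1 - 2 * ε') * ζ := by
  have hζr : 0 ≤ ζ * r := by positivity
  set f : ℝ → ℝ := fun t => φ (t + ζ * r) - φ (t - ζ * r)
  have hf_mono_add : Monotone fun t => φ (t + ζ * r) := hφ.comp fun _ _ h => by linarith
  have hf_mono_sub : Monotone fun t => φ (t - ζ * r) := hφ.comp fun _ _ h => by linarith
  have hf_nonneg : ∀ t, 0 ≤ f t := fun t => sub_nonneg.2 (hφ (by linarith))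
  have hf_int : IntegrableOn f (Set.Icc (-r) r) :=
    (hf_mono_add.locallyIntegrable.sub hf_mono_sub.locallyIntegrable).integrableOn_isCompact
      isCompact_Icc
  have hinner : Measurable fun x : EuclideanSpace ℝ (Fin d) => (inner ℝ γ x : ℝ) :=
    (continuous_const.inner continuous_id).measurable
  have hqbar : 0 ≤ qbar := (hg_nonneg 0).trans (hg_bound 0)
  calc ∫ x, f (inner ℝ γ x) ∂Q = ∫ t, g t * f t :=
        integral_comp_eq_integral_smul_of_map_eq_withDensity hinner.aemeasurable hg_nonneg
          hg_meas hmap (hf_mono_add.measurable.sub hf_mono_sub.measurable).aestronglyMeasurable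
    _ ≤ qbar * ∫ t in Set.Icc (-r) r, f t :=
        integral_mul_le_mul_setIntegral measurableSet_Icc hf_nonneg hf_int hg_nonneg hg_bound
          hg_supp
    _ = qbar * ∫ t in (-r)..r, f t := by
        rw [integral_Icc_eq_integral_Ioc, intervalIntegral.integral_of_le (by linarith)]
    _ ≤ qbar * (2 * (ζ * r) * ((1 - ε') - ε')) :=
        mul_le_mul_of_nonneg_left (hφ.intervalIntegral_comp_add_sub_comp_sub_le
          (fun u => (hφb u).1) (fun u => (hφb u).2) _ _ hζr) hqbar
    _ = 2 * r * qbar * (1 - 2 * ε') * ζ := by ring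

theorem stmt9 (d : ℕ) (Q : Measure (EuclideanSpace ℝ (Fin d)))
    [IsProbabilityMeasure Q]
    (γ : EuclideanSpace ℝ (Fin d))
    (g : ℝ → ℝ) (qbar r ζ ε' : ℝ) (hr : 0 < r) (hζ : 0 < ζ)
    (hε : ε' ∈ Set.Ioo (0:ℝ) (1/2))
    (hg_nonneg : ∀ t, 0 ≤ g t) (hg_meas : Measurable g)
    (hg_bound : ∀ t, g t ≤ qbar)
    (hg_supp : ∀ t, t ∉ Set.Icc (-r) r → g t = 0)
    (hmap : Q.map (fun x => (inner ℝ γ x : ℝ)) =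
      MeasureTheory.volume.withDensity (fun t => ENNReal.ofReal (g t)))
    (φ : ℝ → ℝ) (hφ : Monotone φ) (hφb : ∀ u, φ u ∈ Set.Icc ε' (1 - ε')) :
    ∫ x, (φ ((inner ℝ γ x : ℝ) + ζ * r) - φ ((inner ℝ γ x : ℝ) - ζ * r)) ∂Q
      ≤ 2 * r * qbar * (1 - 2 * ε') * ζ :=
  stmt9_general d Q γ g qbar r ζ ε' hr hζ hg_nonneg hg_meas hg_bound hg_supp hmap φ hφ hφb
end
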